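/- arXiv:2406.14125 — 2 statements merged into one kernel-verified Lean document; each statement's English description precedes it below -/
import Mathlib

section
/- Let p = 16/e, where e is Euler's number, and let n ≥ 1 be an integer. For a word w : Fin n → Fin 4 and a symbol a ∈ Fin 4, let M_a(w) be the number of coordinates of w equal to a. Then the number of words w ∈ (Fin 4)^n for which there exist two distinct symbols a ≠ b with M_a(w) + M_b(w) > (p−1)n/p (as real numbers) is strictly less than 6·4^{7n/8} (a real power). Consequently, the code C consisting of all words of ℤ_4^n in which the two most common symbols together occupy at most (p−1)n/p positions satisfies |C| > 4^n − 6·4^{7n/8}, so |C| ∈ Θ(4^n). -/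
/-!
Write `x = e n / 16`, so that the threshold `(p - 1) n / p` is `n - x`. A word is bad for the
pair `{a, b}` exactly when fewer than `x` of its letters lie outside `{a, b}`. Exponential
moments bound such words: each contributes at least `1` to `4 ^ x · 4 ^ (-#{j | w j ∉ {a, b}})`,
and summing this weight over all words factorises into `4 ^ x · (2 + 2 / 4) ^ n`. With six pairs,
the count is below `6 · (4 ^ (e / 16) · 5 / 2) ^ n`, and `4 ^ (e / 16) · 5 / 2 < 4 ^ (7 / 8)`
because `e < 2.8` and `(5 / 2) ^ 10 < 4 ^ 7`.
-/

/-- `Mcount w a` is the number of coordinates of the word `w` equal to the symbol `a`. -/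
def Mcount {n : ℕ} (w : Fin n → Fin 4) (a : Fin 4) : ℕ :=
  (Finset.univ.filter fun j => w j = a).card

open Finset Real

section ExponentialMoment

variable {ι α : Type*} [Fintype ι] [DecidableEq ι] [Fintype α] [DecidableEq α]

lemma sum_pow_card_filter_notMem (S : Finset α) (r : ℝ) :
    ∑ w : ι → α, r ^ #{j | w j ∉ S} = (#S + r * #Sᶜ) ^ Fintype.card ι := by
  have hsum : ∑ a : α, (if a ∉ S then r else 1) = #S + r * #Sᶜ := by
    rw [sum_ite]
    simp [filter_notMem_eq_sdiff, ← compl_eq_univ_sdiff]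
    ring
  rw [← hsum, ← card_univ, ← prod_const, Fintype.prod_sum]
  refine Fintype.sum_congr _ _ fun w => ?_
  rw [prod_ite, prod_const_one, mul_one, prod_const]

lemma card_filter_card_notMem_le (S : Finset α) {t : ℝ} (ht : 1 ≤ t) (x : ℝ) :
    (#{w : ι → α | (#{j | w j ∉ S} : ℝ) ≤ x} : ℝ) ≤
      t ^ x * (#S + #Sᶜ / t) ^ Fintype.card ι := by
  have ht0 : 0 < t := by linarith
  calc (#{w : ι → α | (#{j | w j ∉ S} : ℝ) ≤ x} : ℝ)
      = ∑ w ∈ {w : ι → α | (#{j | w j ∉ S} : ℝ) ≤ x}, (1 : ℝ) := by simp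
    _ ≤ ∑ w ∈ {w : ι → α | (#{j | w j ∉ S} : ℝ) ≤ x}, t ^ x * t⁻¹ ^ #{j | w j ∉ S} := by
      refine sum_le_sum fun w hw => ?_
      rw [inv_pow, ← rpow_natCast, ← div_eq_mul_inv, one_le_div (by positivity)]
      exact rpow_le_rpow_of_exponent_le ht (mem_filter.1 hw).2
    _ ≤ ∑ w : ι → α, t ^ x * t⁻¹ ^ #{j | w j ∉ S} :=
      sum_le_sum_of_subset_of_nonneg (subset_univ _) fun _ _ _ => by positivity
    _ = t ^ x * (#S + #Sᶜ / t) ^ Fintype.card ι := by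
      rw [← mul_sum, sum_pow_card_filter_notMem, inv_mul_eq_div]

end ExponentialMoment

lemma Mcount_add_Mcount_add_card_filter_notMem {n : ℕ} (w : Fin n → Fin 4) {a b : Fin 4}
    (hab : a ≠ b) :
    Mcount w a + Mcount w b + #{j | w j ∉ ({a, b} : Finset (Fin 4))} = n := by
  have hpair : Mcount w a + Mcount w b = #{j | w j ∈ ({a, b} : Finset (Fin 4))} := by
    simp only [Mcount, mem_insert, mem_singleton, filter_or]
    rw [card_union_of_disjoint (disjoint_filter.2 fun j _ ha hb => hab (ha.symm.trans hb))]
  rw [hpair, card_filter_add_card_filter_not, card_univ, Fintype.card_fin]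

lemma card_exists_pair_lt_Mcount_add_Mcount_le (n : ℕ) (x : ℝ) :
    (Nat.card {w : Fin n → Fin 4 // ∃ a b : Fin 4, a ≠ b ∧
        (n - x < ((Mcount w a + Mcount w b : ℕ) : ℝ))} : ℝ) ≤ 6 * (4 ^ x * (5 / 2) ^ n) := by
  set bad : Finset (Fin 4) → Finset (Fin n → Fin 4) := fun S =>
    {w | (#{j | w j ∉ S} : ℝ) ≤ x}
  have hcover : ({w | ∃ a b : Fin 4, a ≠ b ∧ (n - x < ((Mcount w a + Mcount w b : ℕ) : ℝ))} :
      Finset (Fin n → Fin 4)) ⊆ (powersetCard 2 univ).biUnion bad := by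
    intro w hw
    obtain ⟨a, b, hab, hlt⟩ := (mem_filter.1 hw).2
    refine mem_biUnion.2 ⟨{a, b}, mem_powersetCard.2 ⟨subset_univ _, card_pair hab⟩, ?_⟩
    have hsplit : ((Mcount w a + Mcount w b : ℕ) : ℝ) +
        #{j | w j ∉ ({a, b} : Finset (Fin 4))} = n := by
      exact_mod_cast Mcount_add_Mcount_add_card_filter_notMem w hab
    exact mem_filter.2 ⟨mem_univ _, by linarith⟩
  have hbad : ∀ S ∈ powersetCard 2 (univ : Finset (Fin 4)),
      (#(bad S) : ℝ) ≤ 4 ^ x * (5 / 2) ^ n := by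
    intro S hS
    have hS2 : #S = 2 := (mem_powersetCard.1 hS).2
    have hSc : #Sᶜ = 2 := by rw [card_compl, hS2]; rfl
    have := card_filter_card_notMem_le (ι := Fin n) S (t := 4) (by norm_num) x
    rw [hS2, hSc, Fintype.card_fin] at this
    norm_num at this
    exact this
  rw [Nat.card_eq_fintype_card, Fintype.card_subtype]
  calc _ ≤ (#((powersetCard 2 univ).biUnion bad) : ℝ) := mod_cast card_le_card hcover
    _ ≤ ∑ S ∈ powersetCard 2 univ, (#(bad S) : ℝ) := mod_cast card_biUnion_le
    _ ≤ ∑ S ∈ powersetCard 2 (univ : Finset (Fin 4)), 4 ^ x * (5 / 2 : ℝ) ^ n := sum_le_sum hbad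
    _ = 6 * (4 ^ x * (5 / 2) ^ n) := by
      rw [sum_const, card_powersetCard, card_univ, Fintype.card_fin, nsmul_eq_mul]
      norm_num [Nat.choose]

lemma five_halves_lt_four_rpow : (5 / 2 : ℝ) < 4 ^ (7 / 10 : ℝ) := by
  refine lt_of_pow_lt_pow_left₀ 10 (by positivity) ?_
  rw [← rpow_mul_natCast (by norm_num)]
  norm_num

lemma four_rpow_mul_five_halves_pow_lt {n : ℕ} (hn : n ≠ 0) :
    (4 : ℝ) ^ (exp 1 * n / 16) * (5 / 2) ^ n < 4 ^ (7 * (n : ℝ) / 8) := by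
  have he : exp 1 / 16 + 7 / 10 ≤ 7 / 8 := by linarith [exp_one_lt_d9]
  have hbase : 4 ^ (exp 1 / 16) * (5 / 2 : ℝ) < 4 ^ (7 / 8 : ℝ) :=
    calc 4 ^ (exp 1 / 16) * (5 / 2 : ℝ) < 4 ^ (exp 1 / 16) * 4 ^ (7 / 10 : ℝ) := by
          gcongr; exact five_halves_lt_four_rpow
      _ ≤ 4 ^ (7 / 8 : ℝ) := by
          rw [← rpow_add (by norm_num)]; exact rpow_le_rpow_of_exponent_le (by norm_num) he
  calc (4 : ℝ) ^ (exp 1 * n / 16) * (5 / 2) ^ n = (4 ^ (exp 1 / 16) * (5 / 2 : ℝ)) ^ n := by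
        rw [mul_pow, ← rpow_mul_natCast (by norm_num)]; ring_nf
    _ < (4 ^ (7 / 8 : ℝ)) ^ n := pow_lt_pow_left₀ hbase (by positivity) hn
    _ = 4 ^ (7 * (n : ℝ) / 8) := by rw [← rpow_mul_natCast (by norm_num)]; ring_nf

/-- With `p = 16/e`, the number of quaternary words of length `n ≥ 1` in which some two
distinct symbols together occur in more than `(p-1)n/p` positions is strictly less than
`6·4^{7n/8}`; hence the code `C` of all remaining words satisfies `|C| > 4ⁿ - 6·4^{7n/8}`. -/
theorem bad_words_count_lt
    (n : ℕ) (hn : 1 ≤ n) :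
    (Nat.card {w : Fin n → Fin 4 // ∃ a b : Fin 4, a ≠ b ∧
        ((16 / Real.exp 1 - 1) * n / (16 / Real.exp 1) <
          ((Mcount w a + Mcount w b : ℕ) : ℝ))} : ℝ) <
      6 * (4 : ℝ) ^ (7 * (n : ℝ) / 8) := by
  have hthreshold : (16 / exp 1 - 1) * n / (16 / exp 1) = n - exp 1 * n / 16 := by
    field_simp [exp_ne_zero]
  simp only [hthreshold]
  calc _ ≤ 6 * (4 ^ (exp 1 * n / 16) * (5 / 2) ^ n) :=
        card_exists_pair_lt_Mcount_add_Mcount_le n _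
    _ < 6 * (4 : ℝ) ^ (7 * (n : ℝ) / 8) := by
        gcongr; exact four_rpow_mul_five_halves_pow_lt (by omega)
end

section
/- Let q ≥ 2, t ≥ 1 and n ≥ 2t+2 be integers, and let x and x' be two distinct words of length n over the alphabet ℤ_q. Suppose D and D' are sets of deletion vectors for length-n words, each vector of weight at most t, with |D| = |D'| = N, such that the output set of D on x equals the output set of D' on x'. Then N ≤ V_2(n,t) − V_2(⌈n/2⌉ − 1, t). (This extends the binary uniqueness bound to arbitrary alphabet size q: the proof reduces to the binary case via the map that sends some symbols to 0 and the rest to 1, since any deletion vector turning x and x' into the same word also turns their binary images into the same word.) -/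
/-- Applying a deletion vector `S` (a set of coordinate positions) to a word
`x` of length `n`: delete the entries at positions in `S`, keeping the rest in order. -/
def delWord {q n : ℕ} (x : Fin n → Fin q) (S : Finset (Fin n)) : List (Fin q) :=
  ((Finset.univ \ S).sort (· ≤ ·)).map x

/-- Binary Hamming ball volume `V₂(n,t) = ∑_{i=0}^{t} C(n,i)`. -/
def V₂ (n t : ℕ) : ℕ := ∑ i ∈ Finset.range (t + 1), n.choose i

/-!
Choose a position `i` with `x i ≠ x' i` and map both words to binary by `c ↦ (c = x' i)`; the
binary images `X ≠ X'` still have equal outputs under `D` and `D'`. Two distinct binary words of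
length `n` are told apart by a subsequence `w` of length at most `n / 2 + 1` lying in one of
them, say `X`, but not in `X'`. Writing `w` as `X` with a set `E` of `n - |w|` positions deleted,
every `S ⊆ E` keeps `w` in the output, which then cannot come from `X'`; so `D` avoids all
`V₂(|E|, t)` sets of weight at most `t` inside `E`.
-/

open List

def Separates {α : Type*} (w X X' : List α) : Prop := w <+ X ∧ ¬ w <+ X'

section Separates

variable {α : Type*}

theorem Separates.cons_cons {w X X' : List α} (c : α) (h : Separates w X X') :
    Separates (c :: w) (c :: X) (c :: X') :=
  ⟨h.1.cons_cons c, fun h' => h.2 (cons_sublist_cons.mp h')⟩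

theorem Separates.cons_of_ne {c d : α} {w X X' : List α} (h : Separates (d :: w) X X')
    (hdc : d ≠ c) : Separates (d :: w) (c :: X) (c :: X') :=
  ⟨h.1.cons c, fun h' => h.2 (h'.of_cons_of_ne hdc)⟩

theorem separates_replicate_of_count_lt [BEq α] [LawfulBEq α] {a : α} {X X' : List α}
    (h : X'.count a < X.count a) : Separates (replicate (X'.count a + 1) a) X X' := by
  simp only [Separates, replicate_sublist_iff]
  omega

/-- After the first `a` in `b :: Y'` there are fewer than `(b :: Y').count b` copies of `b`. -/
theorem separates_cons_replicate [BEq α] [LawfulBEq α] {a b : α} (hab : a ≠ b)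
    {Y Y' : List α} (h : (b :: Y').count b ≤ (a :: Y).count b) :
    Separates (a :: replicate ((b :: Y').count b) b) (a :: Y) (b :: Y') := by
  rw [count_cons_of_ne hab] at h
  refine ⟨(replicate_sublist_iff.mpr h).cons_cons a, fun h' => ?_⟩
  have := replicate_sublist_iff.mp (sublist_of_cons_sublist (h'.of_cons_of_ne hab))
  simp at this

end Separates

/-- Since the two separating words start with different letters, a common first letter of
`X` and `X'` can always be prepended to one of them. -/
theorem exists_separates_pair (X X' : List Bool) (hlen : X.length = X'.length) (hne : X ≠ X') :
    ∃ b u u', Separates (b :: u) X X' ∧ Separates ((!b) :: u') X' X ∧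
      u.length + u'.length ≤ X.length := by
  induction X generalizing X' with
  | nil => exact absurd (eq_nil_of_length_eq_zero hlen.symm).symm hne
  | cons a Y ih =>
    obtain _ | ⟨a', Y'⟩ := X'
    · simp at hlen
    by_cases ha : a = a'
    · subst ha
      obtain ⟨b, u, u', hu, hu', hl⟩ := ih Y' (by simpa using hlen) (fun h => hne (h ▸ rfl))
      obtain rfl | rfl : a = b ∨ a = !b := by cases a <;> cases b <;> simp
      · exact ⟨a, a :: u, u', hu.cons_cons a, hu'.cons_of_ne (by simp), by simp; omega⟩
      · exact ⟨b, u, (!b) :: u', hu.cons_of_ne (by simp), hu'.cons_cons (!b), by simp; omega⟩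
    obtain rfl : a' = !a := by cases a <;> cases a' <;> simp_all
    have hX := count_not_add_count (a :: Y) a
    have hX' := count_not_add_count ((!a) :: Y') a
    by_cases hc : count a ((!a) :: Y') < count a (a :: Y)
    · refine ⟨a, replicate (count a ((!a) :: Y')) a, replicate (count (!a) (a :: Y)) (!a),
        separates_replicate_of_count_lt hc, separates_replicate_of_count_lt (by omega), ?_⟩
      simp only [length_replicate]
      omega
    · refine ⟨a, replicate (count (!a) ((!a) :: Y')) (!a), replicate (count a (a :: Y)) a,
        separates_cons_replicate (by simp) (by omega),
        separates_cons_replicate (by simp) (not_lt.mp hc), ?_⟩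
      simp only [length_replicate]
      omega

theorem exists_short_separates {X X' : List Bool} (hlen : X.length = X'.length) (hne : X ≠ X') :
    ∃ w, (Separates w X X' ∨ Separates w X' X) ∧ 2 * w.length ≤ X.length + 2 := by
  obtain ⟨b, u, u', hu, hu', hl⟩ := exists_separates_pair X X' hlen hne
  rcases le_total u.length u'.length with h | h
  · exact ⟨b :: u, .inl hu, by simp; omega⟩
  · exact ⟨(!b) :: u', .inr hu', by simp; omega⟩

section delWord

variable {q n : ℕ}

theorem delWord_sublist_delWord (x : Fin n → Fin q) {S T : Finset (Fin n)} (h : S ⊆ T) :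
    delWord x T <+ delWord x S := by
  refine Sublist.map x (sublist_of_subperm_of_sortedLE ?_ (Finset.sortedLT_sort _).sortedLE
    (Finset.sortedLT_sort _).sortedLE)
  refine (Finset.sort_nodup _ _).subperm fun i hi => ?_
  rw [Finset.mem_sort] at hi ⊢
  exact Finset.sdiff_subset_sdiff subset_rfl h hi

theorem delWord_empty (x : Fin n → Fin q) : delWord x ∅ = ofFn x := by
  rw [delWord, Finset.sdiff_empty, Fin.sort_univ, ofFn_eq_map]

theorem delWord_sublist_ofFn (x : Fin n → Fin q) (S : Finset (Fin n)) :
    delWord x S <+ ofFn x :=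
  delWord_empty x ▸ delWord_sublist_delWord x S.empty_subset

theorem length_delWord (x : Fin n → Fin q) (S : Finset (Fin n)) :
    (delWord x S).length = n - S.card := by
  rw [delWord, length_map, Finset.length_sort, Finset.card_sdiff_of_subset S.subset_univ,
    Finset.card_univ, Fintype.card_fin]

theorem exists_delWord_eq_of_sublist {x : Fin n → Fin q} {l : List (Fin q)}
    (h : l <+ ofFn x) : ∃ E, delWord x E = l := by
  rw [ofFn_eq_map, sublist_map_iff] at h
  obtain ⟨l', hl', rfl⟩ := h
  refine ⟨l'.toFinsetᶜ, ?_⟩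
  rw [delWord, ← Finset.compl_eq_univ_sdiff, compl_compl]
  exact congrArg (map x) ((List.toFinset_sort _ (hl'.nodup (nodup_finRange n))).mpr
    (((pairwise_lt_finRange n).sublist hl').imp le_of_lt))

theorem not_sublist_map_delWord {β : Type*} {x x' : Fin n → Fin q}
    {D D' : Finset (Finset (Fin n))} (hout : D.image (delWord x) = D'.image (delWord x'))
    {S : Finset (Fin n)} (hS : S ∈ D) (ψ : Fin q → β) {w : List β}
    (hw : ¬ w <+ (ofFn x').map ψ) : ¬ w <+ (delWord x S).map ψ := by
  obtain ⟨S', -, hS'⟩ := Finset.mem_image.mp (hout ▸ Finset.mem_image_of_mem (delWord x) hS)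
  exact fun h => hw (h.trans (hS' ▸ (delWord_sublist_ofFn x' S').map ψ))

end delWord

theorem V₂_le_V₂ {m m' : ℕ} (t : ℕ) (h : m ≤ m') : V₂ m t ≤ V₂ m' t :=
  Finset.sum_le_sum fun i _ => Nat.choose_le_choose i h

theorem card_filter_powerset_card_le {α : Type*} (A : Finset α) (t : ℕ) :
    (A.powerset.filter (·.card ≤ t)).card = V₂ A.card t := by
  classical
  rw [Finset.card_eq_sum_card_fiberwise (f := Finset.card) (t := Finset.range (t + 1))
    fun S hS => by simpa [Nat.lt_succ_iff] using (Finset.mem_filter.mp hS).2]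
  refine Finset.sum_congr rfl fun i hi => ?_
  rw [Finset.filter_filter, ← Finset.card_powersetCard i A, Finset.powersetCard_eq_filter]
  congr 1
  rw [Finset.mem_range] at hi
  exact Finset.filter_congr fun S _ => ⟨And.right, fun h => ⟨by omega, h⟩⟩

theorem card_le_V₂_sub_of_forall_not_subset {α : Type*} [Fintype α] {t : ℕ}
    {D : Finset (Finset α)} (A : Finset α) (hD : ∀ S ∈ D, S.card ≤ t)
    (hA : ∀ S ∈ D, ¬ S ⊆ A) : D.card ≤ V₂ (Fintype.card α) t - V₂ A.card t := by
  classical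
  set small : Finset α → Finset (Finset α) := fun B => B.powerset.filter (·.card ≤ t)
  have hsub : D ⊆ small Finset.univ \ small A := fun S hS => by
    simp [small, hD S hS, hA S hS]
  have hle : small A ⊆ small Finset.univ := Finset.filter_subset_filter _
    (Finset.powerset_mono.mpr A.subset_univ)
  calc D.card ≤ (small Finset.univ \ small A).card := Finset.card_le_card hsub
    _ = V₂ (Fintype.card α) t - V₂ A.card t := by
      rw [Finset.card_sdiff_of_subset hle, card_filter_powerset_card_le,
        card_filter_powerset_card_le, Finset.card_univ]

theorem card_le_of_separates {β : Type*} {q n t : ℕ} {x x' : Fin n → Fin q}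
    {D D' : Finset (Finset (Fin n))} (hD : ∀ S ∈ D, S.card ≤ t)
    (hout : D.image (delWord x) = D'.image (delWord x')) (ψ : Fin q → β) {w : List β}
    (hw : Separates w ((ofFn x).map ψ) ((ofFn x').map ψ)) :
    D.card ≤ V₂ n t - V₂ (n - w.length) t := by
  obtain ⟨l, hl, rfl⟩ := sublist_map_iff.mp hw.1
  obtain ⟨E, rfl⟩ := exists_delWord_eq_of_sublist hl
  have hE : ∀ S ∈ D, ¬ S ⊆ E := fun S hS hSE =>
    not_sublist_map_delWord hout hS ψ hw.2 ((delWord_sublist_delWord x hSE).map ψ)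
  have hEn : E.card ≤ n := by simpa using E.card_le_univ
  simpa [length_delWord, Nat.sub_sub_self hEn] using card_le_V₂_sub_of_forall_not_subset E hD hE

theorem deletion_vectors_at_most_t_uniqueness_qary_general
    (q t n : ℕ)
    (x x' : Fin n → Fin q) (hne : x ≠ x')
    (N : ℕ) (D D' : Finset (Finset (Fin n)))
    (hD : ∀ S ∈ D, S.card ≤ t) (hD' : ∀ S ∈ D', S.card ≤ t)
    (hDcard : D.card = N) (hD'card : D'.card = N)
    (hout : D.image (delWord x) = D'.image (delWord x')) :
    N ≤ V₂ n t - V₂ ((n + 1) / 2 - 1) t := by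
  obtain ⟨i, hi⟩ := Function.ne_iff.mp hne
  set ψ : Fin q → Bool := fun c => decide (c = x' i)
  have hψ : (ofFn x).map ψ ≠ (ofFn x').map ψ := fun h => by
    simpa [ψ, hi] using congrArg (·[i]?) h
  obtain ⟨w, hw, hwlen⟩ := exists_short_separates (by simp) hψ
  have hm : V₂ ((n + 1) / 2 - 1) t ≤ V₂ (n - w.length) t :=
    V₂_le_V₂ t (by simp at hwlen; omega)
  rcases hw with hw | hw
  · have := card_le_of_separates hD hout ψ hw
    omega
  · have := card_le_of_separates hD' hout.symm ψ hw
    omega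

/-- The uniqueness bound for deletion vectors of weight at most `t` extends to
arbitrary alphabet size `q ≥ 2`. -/
theorem deletion_vectors_at_most_t_uniqueness_qary
    (q t n : ℕ) (hq : 2 ≤ q) (ht : 1 ≤ t) (hn : 2 * t + 2 ≤ n)
    (x x' : Fin n → Fin q) (hne : x ≠ x')
    (N : ℕ) (D D' : Finset (Finset (Fin n)))
    (hD : ∀ S ∈ D, S.card ≤ t) (hD' : ∀ S ∈ D', S.card ≤ t)
    (hDcard : D.card = N) (hD'card : D'.card = N)
    (hout : D.image (delWord x) = D'.image (delWord x')) :
    N ≤ V₂ n t - V₂ ((n + 1) / 2 - 1) t :=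
  deletion_vectors_at_most_t_uniqueness_qary_general q t n x x' hne N D D' hD hD' hDcard hD'card
    hout
end
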